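/- arXiv:2604.03419 — 5 statements merged into one kernel-verified Lean document; each statement's English description precedes it below -/
import Mathlib

section
/- If f is submodular, then for every coordinate j, the partial derivative ∂F/∂x_j of the multilinear extension is nonincreasing in each coordinate of x on [0,1]^n; in particular, ∂²F/∂x_j∂x_k (x) ≤ 0 for all j ≠ k and x ∈ [0,1]^n. -/
open Finset

/-- Partial derivative of the multilinear extension with respect to coordinate `j`. -/
def mlgrad (n : ℕ) (f : Finset (Fin n) → ℝ) (x : Fin n → ℝ) (j : Fin n) : ℝ :=
  ∑ R ∈ ((univ : Finset (Fin n)).erase j).powerset,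
    (f (insert j R) - f R) * (∏ p ∈ R, x p) *
      ∏ p ∈ ((univ : Finset (Fin n)).erase j) \ R, (1 - x p)

/-- If `f` is submodular, then each partial derivative `∂F/∂x_j` of the
multilinear extension is nonincreasing in every coordinate of `x` on `[0,1]^n`; in
particular the mixed second partials satisfy `∂²F/∂x_j∂x_k (x) ≤ 0` for `j ≠ k`. -/
theorem mlgrad_antitone_of_submodular (n : ℕ) (f : Finset (Fin n) → ℝ)
    (hsub : ∀ A B : Finset (Fin n), A ⊆ B → ∀ e ∉ B,
      f (insert e B) - f B ≤ f (insert e A) - f A) :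
    (∀ (j k : Fin n) (x : Fin n → ℝ), (∀ p, x p ∈ Set.Icc (0 : ℝ) 1) →
      ∀ s t : ℝ, 0 ≤ s → s ≤ t → t ≤ 1 →
        mlgrad n f (Function.update x k t) j ≤ mlgrad n f (Function.update x k s) j) ∧
    (∀ (j k : Fin n) (x : Fin n → ℝ), j ≠ k → (∀ p, x p ∈ Set.Icc (0 : ℝ) 1) →
      deriv (fun t : ℝ => mlgrad n f (Function.update x k t) j) (x k) ≤ 0) := by
  have key : ∀ (j k : Fin n), j ≠ k → ∀ (x : Fin n → ℝ), (∀ p, x p ∈ Set.Icc (0:ℝ) 1) →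
      ∃ a b : ℝ, b ≤ 0 ∧ ∀ t : ℝ, mlgrad n f (Function.update x k t) j = a + b * t := by
    intro j k hjk x hx
    set E := ((univ : Finset (Fin n)).erase j).erase k with hE
    have hkE : k ∉ E := notMem_erase k _
    have hjE : j ∉ E := fun h => (mem_erase.mp (mem_of_mem_erase h)).1 rfl
    have hins : insert k E = (univ : Finset (Fin n)).erase j :=
      insert_erase (mem_erase.mpr ⟨hjk.symm, mem_univ k⟩)
    refine ⟨∑ S ∈ E.powerset, (f (insert j S) - f S) *
        ((∏ p ∈ S, x p) * ∏ p ∈ E \ S, (1 - x p)),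
      ∑ S ∈ E.powerset, ((f (insert j (insert k S)) - f (insert k S)) -
          (f (insert j S) - f S)) * ((∏ p ∈ S, x p) * ∏ p ∈ E \ S, (1 - x p)), ?_, ?_⟩
    · apply Finset.sum_nonpos
      intro S hS
      have hS' := mem_powerset.mp hS
      have hjS : j ∉ insert k S := by
        simp only [mem_insert, not_or]
        exact ⟨hjk, fun h => hjE (hS' h)⟩
      have hc : (f (insert j (insert k S)) - f (insert k S)) - (f (insert j S) - f S) ≤ 0 :=
        sub_nonpos.mpr (hsub S (insert k S) (subset_insert _ _) j hjS)
      have hw : 0 ≤ (∏ p ∈ S, x p) * ∏ p ∈ E \ S, (1 - x p) := by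
        apply mul_nonneg
        · exact prod_nonneg fun p _ => (hx p).1
        · exact prod_nonneg fun p _ => by linarith [(hx p).2]
      exact mul_nonpos_iff.mpr (Or.inr ⟨hc, hw⟩)
    · intro t
      rw [mlgrad, ← hins, Finset.sum_powerset_insert hkE, Finset.sum_mul,
        ← Finset.sum_add_distrib, ← Finset.sum_add_distrib]
      apply Finset.sum_congr rfl
      intro S hS
      have hS' := mem_powerset.mp hS
      have hkS : k ∉ S := fun h => hkE (hS' h)
      have hST : ∀ p ∈ S, p ≠ k := fun p hp h => hkS (h ▸ hp)
      have hES : ∀ p ∈ E \ S, p ≠ k := fun p hp h => hkE (h ▸ (mem_sdiff.mp hp).1)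
      have h1 : ∏ p ∈ S, Function.update x k t p = ∏ p ∈ S, x p :=
        prod_congr rfl fun p hp => Function.update_of_ne (hST p hp) _ _
      have hsd1 : insert k E \ S = insert k (E \ S) := insert_sdiff_of_notMem _ hkS
      have hkES : k ∉ E \ S := fun h => hkE (mem_sdiff.mp h).1
      have h2 : ∏ p ∈ insert k E \ S, (1 - Function.update x k t p)
          = (1 - t) * ∏ p ∈ E \ S, (1 - x p) := by
        have h2' : ∏ p ∈ E \ S, (1 - Function.update x k t p) = ∏ p ∈ E \ S, (1 - x p) :=
          prod_congr rfl fun p hp => by rw [Function.update_of_ne (hES p hp)]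
        rw [hsd1, prod_insert hkES, Function.update_self, h2']
      have h3 : ∏ p ∈ insert k S, Function.update x k t p = t * ∏ p ∈ S, x p := by
        rw [prod_insert hkS, Function.update_self, h1]
      have hsd2 : insert k E \ insert k S = E \ S := by
        ext p
        by_cases hpk : p = k
        · subst hpk
          simp [hkE]
        · simp [mem_sdiff, mem_insert, hpk]
      have h4 : ∏ p ∈ insert k E \ insert k S, (1 - Function.update x k t p)
          = ∏ p ∈ E \ S, (1 - x p) := by
        rw [hsd2]
        exact prod_congr rfl fun p hp => by rw [Function.update_of_ne (hES p hp)]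
      rw [h1, h2, h3, h4]
      ring
  constructor
  · intro j k x hx s t hs hst ht
    by_cases hjk : j = k
    · subst hjk
      have heq : ∀ u : ℝ, mlgrad n f (Function.update x j u) j = mlgrad n f x j := by
        intro u
        rw [mlgrad, mlgrad]
        apply Finset.sum_congr rfl
        intro R hR
        have hR' := mem_powerset.mp hR
        have h1 : ∏ p ∈ R, Function.update x j u p = ∏ p ∈ R, x p :=
          prod_congr rfl fun p hp => Function.update_of_ne (mem_erase.mp (hR' hp)).1 _ _
        have h2 : ∏ p ∈ ((univ : Finset (Fin n)).erase j) \ R, (1 - Function.update x j u p)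
            = ∏ p ∈ ((univ : Finset (Fin n)).erase j) \ R, (1 - x p) :=
          prod_congr rfl fun p hp => by
            rw [Function.update_of_ne (mem_erase.mp (mem_sdiff.mp hp).1).1]
        rw [h1, h2]
      rw [heq t, heq s]
    · obtain ⟨a, b, hb, hab⟩ := key j k hjk x hx
      rw [hab t, hab s]
      have := mul_le_mul_of_nonpos_left hst hb
      linarith
  · intro j k x hjk hx
    obtain ⟨a, b, hb, hab⟩ := key j k hjk x hx
    have hfe : (fun t : ℝ => mlgrad n f (Function.update x k t) j) = fun t => a + b * t :=
      funext hab
    rw [hfe]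
    have hd : HasDerivAt (fun t : ℝ => a + b * t) b (x k) := by
      simpa using ((hasDerivAt_id (x k)).const_mul b).const_add a
    rw [hd.deriv]
    exact hb
end

section
/- Let f be monotone submodular with f(∅)=0 and multilinear extension F. Then for all x, y ∈ [0,1]^n with y ≥ 0 componentwise, we have y^T ∇F(x) ≥ F(x ∨ y) − F(x) ≥ F(y) − F(x), where x ∨ y is the componentwise maximum. In particular, for any x* ∈ [0,1]^n, (x*)^T ∇F(x) ≥ F(x*) − F(x). -/
open Finset

/-- The multilinear extension. -/
def mlext (n : ℕ) (f : Finset (Fin n) → ℝ) (x : Fin n → ℝ) : ℝ :=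
  ∑ R : Finset (Fin n), f R * (∏ p ∈ R, x p) * ∏ p ∈ Rᶜ, (1 - x p)

/-- General weighted sum over subsets of a ground set `E`. -/
def msum (n : ℕ) (E : Finset (Fin n)) (g : Finset (Fin n) → ℝ) (x : Fin n → ℝ) : ℝ :=
  ∑ R ∈ E.powerset, g R * (∏ p ∈ R, x p) * ∏ p ∈ E \ R, (1 - x p)

lemma mlext_eq_msum (n : ℕ) (f : Finset (Fin n) → ℝ) (x : Fin n → ℝ) :
    mlext n f x = msum n univ f x := by
  unfold mlext msum
  rw [Finset.powerset_univ]
  exact Finset.sum_congr rfl (fun R _ => by rw [Finset.compl_eq_univ_sdiff])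

lemma mlgrad_eq_msum (n : ℕ) (f : Finset (Fin n) → ℝ) (x : Fin n → ℝ) (j : Fin n) :
    mlgrad n f x j = msum n (univ.erase j) (fun R => f (insert j R) - f R) x := rfl

lemma msum_congr (n : ℕ) (E : Finset (Fin n)) (g : Finset (Fin n) → ℝ)
    (x x' : Fin n → ℝ) (h : ∀ p ∈ E, x p = x' p) : msum n E g x = msum n E g x' := by
  unfold msum
  refine Finset.sum_congr rfl (fun R hR => ?_)
  rw [Finset.mem_powerset] at hR
  have h1 : ∏ p ∈ R, x p = ∏ p ∈ R, x' p :=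
    Finset.prod_congr rfl (fun p hp => h p (hR hp))
  have h2 : ∏ p ∈ E \ R, (1 - x p) = ∏ p ∈ E \ R, (1 - x' p) :=
    Finset.prod_congr rfl (fun p hp => by rw [h p (Finset.mem_sdiff.mp hp).1])
  rw [h1, h2]

lemma msum_nonneg (n : ℕ) (E : Finset (Fin n)) (g : Finset (Fin n) → ℝ)
    (x : Fin n → ℝ) (hg : ∀ R ∈ E.powerset, 0 ≤ g R)
    (hx : ∀ p, x p ∈ Set.Icc (0 : ℝ) 1) : 0 ≤ msum n E g x := by
  refine Finset.sum_nonneg (fun R hR => ?_)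
  have h1 : (0:ℝ) ≤ ∏ p ∈ R, x p := Finset.prod_nonneg (fun p _ => (hx p).1)
  have h2 : (0:ℝ) ≤ ∏ p ∈ E \ R, (1 - x p) :=
    Finset.prod_nonneg (fun p _ => by linarith [(hx p).2])
  exact mul_nonneg (mul_nonneg (hg R hR) h1) h2

lemma msum_nonpos (n : ℕ) (E : Finset (Fin n)) (g : Finset (Fin n) → ℝ)
    (x : Fin n → ℝ) (hg : ∀ R ∈ E.powerset, g R ≤ 0)
    (hx : ∀ p, x p ∈ Set.Icc (0 : ℝ) 1) : msum n E g x ≤ 0 := by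
  refine Finset.sum_nonpos (fun R hR => ?_)
  have h1 : (0:ℝ) ≤ ∏ p ∈ R, x p := Finset.prod_nonneg (fun p _ => (hx p).1)
  have h2 : (0:ℝ) ≤ ∏ p ∈ E \ R, (1 - x p) :=
    Finset.prod_nonneg (fun p _ => by linarith [(hx p).2])
  exact mul_nonpos_of_nonpos_of_nonneg (mul_nonpos_of_nonpos_of_nonneg (hg R hR) h1) h2

lemma msum_expand (n : ℕ) (E : Finset (Fin n)) (g : Finset (Fin n) → ℝ)
    (x : Fin n → ℝ) {k : Fin n} (hk : k ∈ E) :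
    msum n E g x = ∑ R ∈ (E.erase k).powerset,
      (g R * (1 - x k) + g (insert k R) * x k) * (∏ p ∈ R, x p) *
        ∏ p ∈ (E.erase k) \ R, (1 - x p) := by
  have hks : k ∉ E.erase k := Finset.notMem_erase k E
  unfold msum
  conv_lhs => rw [show E = insert k (E.erase k) from (Finset.insert_erase hk).symm]
  rw [Finset.sum_powerset_insert hks, ← Finset.sum_add_distrib]
  refine Finset.sum_congr rfl (fun R hR => ?_)
  rw [Finset.mem_powerset] at hR
  have hkR : k ∉ R := fun h => hks (hR h)
  have hd1 : insert k (E.erase k) \ R = insert k (E.erase k \ R) := by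
    ext p
    simp only [Finset.mem_sdiff, Finset.mem_insert]
    constructor
    · rintro ⟨(rfl | hp), hpR⟩
      · exact Or.inl rfl
      · exact Or.inr ⟨hp, hpR⟩
    · rintro (rfl | ⟨hp, hpR⟩)
      · exact ⟨Or.inl rfl, hkR⟩
      · exact ⟨Or.inr hp, hpR⟩
  have hd2 : insert k (E.erase k) \ insert k R = E.erase k \ R := by
    ext p
    simp only [Finset.mem_sdiff, Finset.mem_insert, not_or]
    constructor
    · rintro ⟨(rfl | hp), hpk, hpR⟩
      · exact absurd rfl hpk
      · exact ⟨hp, hpR⟩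
    · rintro ⟨hp, hpR⟩
      refine ⟨Or.inr hp, fun h => ?_, hpR⟩
      · exact hks (h ▸ hp)
  have hkE : k ∉ E.erase k \ R := fun h => hks (Finset.mem_sdiff.mp h).1
  rw [hd1, hd2, Finset.prod_insert hkE, Finset.prod_insert hkR]
  ring

lemma msum_update (n : ℕ) (E : Finset (Fin n)) (g : Finset (Fin n) → ℝ)
    (x : Fin n → ℝ) {k : Fin n} (hk : k ∈ E) (a : ℝ) :
    msum n E g (Function.update x k a) =
      msum n E g x + (a - x k) * msum n (E.erase k) (fun R => g (insert k R) - g R) x := by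
  rw [msum_expand n E g (Function.update x k a) hk, msum_expand n E g x hk]
  unfold msum
  rw [Finset.mul_sum, ← Finset.sum_add_distrib]
  refine Finset.sum_congr rfl (fun R hR => ?_)
  rw [Finset.mem_powerset] at hR
  have hks : k ∉ E.erase k := Finset.notMem_erase k E
  have hkR : k ∉ R := fun h => hks (hR h)
  have h1 : ∏ p ∈ R, Function.update x k a p = ∏ p ∈ R, x p :=
    Finset.prod_congr rfl (fun p hp =>
      Function.update_of_ne (by rintro rfl; exact hkR hp) _ _)
  have h2 : ∏ p ∈ E.erase k \ R, (1 - Function.update x k a p) =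
      ∏ p ∈ E.erase k \ R, (1 - x p) :=
    Finset.prod_congr rfl (fun p hp => by
      rw [Function.update_of_ne (by rintro rfl; exact hks (Finset.mem_sdiff.mp hp).1) _ _])
  rw [h1, h2, Function.update_self]
  ring

lemma mlgrad_nonneg (n : ℕ) (f : Finset (Fin n) → ℝ)
    (hmono : ∀ A B : Finset (Fin n), A ⊆ B → f A ≤ f B)
    (x : Fin n → ℝ) (hx : ∀ p, x p ∈ Set.Icc (0 : ℝ) 1) (j : Fin n) :
    0 ≤ mlgrad n f x j := by
  rw [mlgrad_eq_msum]
  exact msum_nonneg n _ _ x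
    (fun R _ => by linarith [hmono R (insert j R) (Finset.subset_insert j R)]) hx

lemma mlext_update (n : ℕ) (f : Finset (Fin n) → ℝ) (x : Fin n → ℝ) (j : Fin n) (a : ℝ) :
    mlext n f (Function.update x j a) = mlext n f x + (a - x j) * mlgrad n f x j := by
  rw [mlext_eq_msum, mlext_eq_msum, mlgrad_eq_msum]
  exact msum_update n univ f x (Finset.mem_univ j) a

lemma mlgrad_update_self (n : ℕ) (f : Finset (Fin n) → ℝ) (x : Fin n → ℝ) (j : Fin n) (a : ℝ) :
    mlgrad n f (Function.update x j a) j = mlgrad n f x j := by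
  rw [mlgrad_eq_msum, mlgrad_eq_msum]
  exact msum_congr n _ _ _ _ (fun p hp =>
    Function.update_of_ne (Finset.ne_of_mem_erase hp) _ _)

lemma mlgrad_update_le (n : ℕ) (f : Finset (Fin n) → ℝ)
    (hsub : ∀ A B : Finset (Fin n), A ⊆ B → ∀ e ∉ B,
      f (insert e B) - f B ≤ f (insert e A) - f A)
    (x : Fin n → ℝ) (hx : ∀ p, x p ∈ Set.Icc (0 : ℝ) 1)
    {j k : Fin n} (hkj : k ≠ j) {a : ℝ} (ha : x k ≤ a) :
    mlgrad n f (Function.update x k a) j ≤ mlgrad n f x j := by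
  rw [mlgrad_eq_msum, mlgrad_eq_msum]
  have hk : k ∈ (univ : Finset (Fin n)).erase j := Finset.mem_erase.mpr ⟨hkj, Finset.mem_univ k⟩
  rw [msum_update n _ _ x hk a]
  have hle : msum n (((univ : Finset (Fin n)).erase j).erase k)
      (fun R => (f (insert j (insert k R)) - f (insert k R)) - (f (insert j R) - f R)) x ≤ 0 := by
    refine msum_nonpos n _ _ x (fun R hR => ?_) hx
    rw [Finset.mem_powerset] at hR
    have hjR : j ∉ insert k R := by
      rw [Finset.mem_insert]
      rintro (rfl | hj)
      · exact hkj rfl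
      · exact absurd ((Finset.mem_erase.mp (Finset.mem_of_mem_erase (hR hj))).1) (fun h => h rfl)
    linarith [hsub R (insert k R) (Finset.subset_insert k R) j hjR]
  nlinarith [hle]

/-- The mixed point: equals `w` on `S`, `x` off `S`. -/
def zmix (n : ℕ) (x w : Fin n → ℝ) (S : Finset (Fin n)) : Fin n → ℝ :=
  fun p => if p ∈ S then w p else x p

lemma zmix_empty (n : ℕ) (x w : Fin n → ℝ) : zmix n x w ∅ = x := by
  funext p; simp [zmix]

lemma zmix_univ (n : ℕ) (x w : Fin n → ℝ) : zmix n x w univ = w := by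
  funext p; simp [zmix]

lemma zmix_insert (n : ℕ) (x w : Fin n → ℝ) (S : Finset (Fin n)) {k : Fin n} (hk : k ∉ S) :
    zmix n x w (insert k S) = Function.update (zmix n x w S) k (w k) := by
  funext p
  by_cases hp : p = k
  · subst hp; simp [zmix, Function.update_self]
  · rw [Function.update_of_ne hp]
    simp [zmix, Finset.mem_insert, hp]

lemma zmix_mem_Icc (n : ℕ) {x w : Fin n → ℝ} (hx : ∀ p, (0:ℝ) ≤ x p)
    (hxw : ∀ p, x p ≤ w p) (hw : ∀ p, w p ≤ 1) (S : Finset (Fin n)) :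
    ∀ p, zmix n x w S p ∈ Set.Icc (0:ℝ) 1 := by
  intro p
  unfold zmix
  by_cases hp : p ∈ S <;> simp only [hp, if_true, if_false] <;>
    constructor <;> [skip; skip; skip; skip] <;>
      first
        | exact le_trans (hx p) (hxw p)
        | exact hw p
        | exact hx p
        | exact le_trans (hxw p) (hw p)

lemma mlgrad_antitone (n : ℕ) (f : Finset (Fin n) → ℝ)
    (hsub : ∀ A B : Finset (Fin n), A ⊆ B → ∀ e ∉ B,
      f (insert e B) - f B ≤ f (insert e A) - f A)
    {x w : Fin n → ℝ} (hx : ∀ p, (0:ℝ) ≤ x p) (hxw : ∀ p, x p ≤ w p) (hw : ∀ p, w p ≤ 1)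
    (j : Fin n) : mlgrad n f w j ≤ mlgrad n f x j := by
  have key : ∀ S : Finset (Fin n), mlgrad n f (zmix n x w S) j ≤ mlgrad n f x j := by
    intro S
    induction S using Finset.induction_on with
    | empty => rw [zmix_empty]
    | insert _ _ hkS ih =>
      rename_i k S
      rw [zmix_insert n x w S hkS]
      by_cases hkj : k = j
      · subst hkj; rw [mlgrad_update_self]; exact ih
      · refine le_trans (mlgrad_update_le n f hsub (zmix n x w S)
          (zmix_mem_Icc n hx hxw hw S) hkj ?_) ih
        show zmix n x w S k ≤ w k
        simp [zmix, hkS, hxw k]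
  have := key univ
  rwa [zmix_univ] at this

lemma mlext_mono (n : ℕ) (f : Finset (Fin n) → ℝ)
    (hmono : ∀ A B : Finset (Fin n), A ⊆ B → f A ≤ f B)
    {x w : Fin n → ℝ} (hx : ∀ p, (0:ℝ) ≤ x p) (hxw : ∀ p, x p ≤ w p) (hw : ∀ p, w p ≤ 1) :
    mlext n f x ≤ mlext n f w := by
  have key : ∀ S : Finset (Fin n), mlext n f x ≤ mlext n f (zmix n x w S) := by
    intro S
    induction S using Finset.induction_on with
    | empty => rw [zmix_empty]
    | insert _ _ hkS ih =>
      rename_i k S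
      rw [zmix_insert n x w S hkS, mlext_update]
      have h1 : zmix n x w S k = x k := by simp [zmix, hkS]
      have h2 : 0 ≤ mlgrad n f (zmix n x w S) k :=
        mlgrad_nonneg n f hmono _ (zmix_mem_Icc n hx hxw hw S) k
      nlinarith [hxw k]
  have := key univ
  rwa [zmix_univ] at this

lemma mlext_grad_main (n : ℕ) (f : Finset (Fin n) → ℝ)
    (hsub : ∀ A B : Finset (Fin n), A ⊆ B → ∀ e ∉ B,
      f (insert e B) - f B ≤ f (insert e A) - f A)
    (hmono : ∀ A B : Finset (Fin n), A ⊆ B → f A ≤ f B)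
    {x y : Fin n → ℝ} (hx : ∀ p, x p ∈ Set.Icc (0 : ℝ) 1)
    (hy : ∀ p, y p ∈ Set.Icc (0 : ℝ) 1) :
    mlext n f (fun p => max (x p) (y p)) - mlext n f x ≤ ∑ j, y j * mlgrad n f x j := by
  set w : Fin n → ℝ := fun p => max (x p) (y p) with hw
  have hx0 : ∀ p, (0:ℝ) ≤ x p := fun p => (hx p).1
  have hxw : ∀ p, x p ≤ w p := fun p => le_max_left _ _
  have hw1 : ∀ p, w p ≤ 1 := fun p => max_le (hx p).2 (hy p).2
  have key : ∀ S : Finset (Fin n),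
      mlext n f (zmix n x w S) - mlext n f x ≤ ∑ j ∈ S, y j * mlgrad n f x j := by
    intro S
    induction S using Finset.induction_on with
    | empty => rw [zmix_empty]; simp
    | insert _ _ hkS ih =>
      rename_i k S
      rw [zmix_insert n x w S hkS, mlext_update, Finset.sum_insert hkS]
      have h1 : zmix n x w S k = x k := by simp [zmix, hkS]
      have h2 : 0 ≤ mlgrad n f (zmix n x w S) k :=
        mlgrad_nonneg n f hmono _ (zmix_mem_Icc n hx0 hxw hw1 S) k
      have h3 : mlgrad n f (zmix n x w S) k ≤ mlgrad n f x k := by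
        refine mlgrad_antitone n f hsub hx0 ?_ ?_ k
        · intro p; unfold zmix; by_cases hp : p ∈ S <;> simp [hp, hxw p]
        · intro p; unfold zmix
          by_cases hp : p ∈ S <;> simp only [hp, if_true, if_false]
          · exact hw1 p
          · exact le_trans (hxw p) (hw1 p)
      have h4 : w k - x k ≤ y k := by
        have : w k ≤ y k + x k := max_le (le_add_of_nonneg_left (hy k).1)
          (le_add_of_nonneg_right (hx k).1)
        linarith
      have h5 : 0 ≤ w k - x k := by linarith [hxw k]
      have h6 : (w k - x k) * mlgrad n f (zmix n x w S) k ≤ y k * mlgrad n f x k :=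
        mul_le_mul h4 h3 h2 (hy k).1
      rw [h1]
      linarith [ih]
  have := key univ
  rwa [zmix_univ] at this

/-- For monotone submodular normalized `f` with multilinear extension `F`,
for all `x, y ∈ [0,1]^n`: `yᵀ∇F(x) ≥ F(x ∨ y) − F(x) ≥ F(y) − F(x)`; in particular,
for any `x* ∈ [0,1]^n`, `(x*)ᵀ∇F(x) ≥ F(x*) − F(x)`. -/
theorem mlext_grad_key_inequality (n : ℕ) (f : Finset (Fin n) → ℝ)
    (hsub : ∀ A B : Finset (Fin n), A ⊆ B → ∀ e ∉ B,
      f (insert e B) - f B ≤ f (insert e A) - f A)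
    (hmono : ∀ A B : Finset (Fin n), A ⊆ B → f A ≤ f B)
    (hnorm : f ∅ = 0) :
    (∀ x y : Fin n → ℝ, (∀ p, x p ∈ Set.Icc (0 : ℝ) 1) → (∀ p, y p ∈ Set.Icc (0 : ℝ) 1) →
      (∑ j, y j * mlgrad n f x j ≥ mlext n f (fun p => max (x p) (y p)) - mlext n f x) ∧
      (mlext n f (fun p => max (x p) (y p)) - mlext n f x ≥ mlext n f y - mlext n f x)) ∧
    (∀ x xstar : Fin n → ℝ, (∀ p, x p ∈ Set.Icc (0 : ℝ) 1) →
      (∀ p, xstar p ∈ Set.Icc (0 : ℝ) 1) →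
      ∑ j, xstar j * mlgrad n f x j ≥ mlext n f xstar - mlext n f x) := by
  have hmax : ∀ x y : Fin n → ℝ, (∀ p, x p ∈ Set.Icc (0 : ℝ) 1) →
      (∀ p, y p ∈ Set.Icc (0 : ℝ) 1) →
      mlext n f y ≤ mlext n f (fun p => max (x p) (y p)) := by
    intro x y hx hy
    exact mlext_mono n f hmono (fun p => (hy p).1) (fun p => le_max_right _ _)
      (fun p => max_le (hx p).2 (hy p).2)
  constructor
  · intro x y hx hy
    exact ⟨mlext_grad_main n f hsub hmono hx hy, by linarith [hmax x y hx hy]⟩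
  · intro x xstar hx hxs
    have h1 := mlext_grad_main n f hsub hmono hx hxs
    have h2 := hmax x xstar hx hxs
    linarith
end

section
/- Let F : [0,1]^n → ℝ≥0 be continuously differentiable with F(0)=0, let M ⊆ [0,1]^n, let x* ∈ M with value OPT = F(x*), and suppose x : [0,1] → [0,1]^n is a C¹ trajectory with x(0)=0 whose derivative satisfies ⟨x′(t), ∇F(x(t))⟩ ≥ τ·(OPT − F(x(t))) for all t ∈ [0,1], for some τ ∈ (0,1]. Then F(x(t)) ≥ (1 − e^{−τt})·OPT for all t ∈ [0,1]; in particular F(x(1)) ≥ (1 − e^{−τ})·OPT. -/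
/-!
Along the trajectory, `g t = F (x t)` satisfies the differential inequality
`g' ≥ τ (OPT - g)`. Multiplying by the integrating factor `e^{τ t}` makes
`t ↦ e^{τ t} (g t - OPT)` nondecreasing, so `e^{τ t} (g t - OPT) ≥ g 0 - OPT = -OPT`.
-/

open Set Real

section DifferentialInequality

variable {f f' : ℝ → ℝ} {τ c a b : ℝ}

theorem monotoneOn_exp_mul_mul_sub_of_hasDerivAt_ge
    (hf : ∀ t ∈ Icc a b, HasDerivAt f (f' t) t)
    (hf' : ∀ t ∈ Icc a b, τ * (c - f t) ≤ f' t) :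
    MonotoneOn (fun t => exp (τ * t) * (f t - c)) (Icc a b) := by
  have hg : ∀ t ∈ Icc a b, HasDerivAt (fun t => exp (τ * t) * (f t - c))
      (exp (τ * t) * (f' t - τ * (c - f t))) t := by
    intro t ht
    have hexp : HasDerivAt (fun s => exp (τ * s)) (exp (τ * t) * τ) t :=
      ((hasDerivAt_id t).const_mul τ).exp.congr_deriv (by simp)
    exact (hexp.fun_mul ((hf t ht).sub_const c)).congr_deriv (by ring)
  refine monotoneOn_of_hasDerivWithinAt_nonneg (convex_Icc a b)
    (fun t ht => (hg t ht).continuousAt.continuousWithinAt)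
    (fun t ht => (hg t (interior_subset ht)).hasDerivWithinAt)
    fun t ht => mul_nonneg (exp_pos _).le (sub_nonneg.2 (hf' t (interior_subset ht)))

theorem le_of_hasDerivAt_ge_mul_sub
    (hf : ∀ t ∈ Icc a b, HasDerivAt f (f' t) t)
    (hf' : ∀ t ∈ Icc a b, τ * (c - f t) ≤ f' t) {t : ℝ} (ht : t ∈ Icc a b) :
    c + exp (-τ * (t - a)) * (f a - c) ≤ f t := by
  have hmono := monotoneOn_exp_mul_mul_sub_of_hasDerivAt_ge hf hf'
    (left_mem_Icc.2 (ht.1.trans ht.2)) ht ht.1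
  have hscaled := mul_le_mul_of_nonneg_left hmono (exp_pos (-τ * t)).le
  have hcancel : exp (-τ * t) * exp (τ * t) = 1 := by rw [← exp_add]; simp
  have hshift : exp (-τ * t) * exp (τ * a) = exp (-τ * (t - a)) := by rw [← exp_add]; ring_nf
  simp only at hscaled
  rw [← mul_assoc, ← mul_assoc, hcancel, hshift, one_mul] at hscaled
  linarith

end DifferentialInequality

theorem atcg_continuous_guarantee_general (n : ℕ) (F : (Fin n → ℝ) → ℝ) (τ : ℝ)
    (hF : ContDiff ℝ 1 F)
    (hF0 : F 0 = 0)
    (xstar : Fin n → ℝ)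
    (x x' : ℝ → Fin n → ℝ)
    (hx0 : x 0 = 0)
    (hxderiv : ∀ t ∈ Set.Icc (0 : ℝ) 1, HasDerivAt x (x' t) t)
    (hineq : ∀ t ∈ Set.Icc (0 : ℝ) 1,
      fderiv ℝ F (x t) (x' t) ≥ τ * (F xstar - F (x t))) :
    (∀ t ∈ Set.Icc (0 : ℝ) 1, F (x t) ≥ (1 - Real.exp (-τ * t)) * F xstar) ∧
    F (x 1) ≥ (1 - Real.exp (-τ)) * F xstar := by
  have hchain : ∀ t ∈ Icc (0 : ℝ) 1,
      HasDerivAt (fun s => F (x s)) (fderiv ℝ F (x t) (x' t)) t := fun t ht =>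
    ((hF.differentiable one_ne_zero) (x t)).hasFDerivAt.comp_hasDerivAt t (hxderiv t ht)
  have hbound : ∀ t ∈ Icc (0 : ℝ) 1, F (x t) ≥ (1 - exp (-τ * t)) * F xstar := by
    intro t ht
    have := le_of_hasDerivAt_ge_mul_sub hchain hineq ht
    simp only [sub_zero, hx0, hF0] at this
    linarith
  exact ⟨hbound, by simpa using hbound 1 (right_mem_Icc.2 zero_le_one)⟩

/-- continuous-time ATCG guarantee: If `F` is `C¹`, nonnegative on
`[0,1]^n`, `F 0 = 0`, `x* ∈ M ⊆ [0,1]^n`, `OPT = F x*`, and the trajectory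
`x : [0,1] → [0,1]^n` with `x 0 = 0` satisfies
`⟨x′(t), ∇F(x(t))⟩ ≥ τ·(OPT − F(x(t)))` on `[0,1]` for some `τ ∈ (0,1]`, then
`F(x(t)) ≥ (1 − e^{−τt})·OPT` for all `t ∈ [0,1]`; in particular
`F(x(1)) ≥ (1 − e^{−τ})·OPT`. -/
theorem atcg_continuous_guarantee (n : ℕ) (F : (Fin n → ℝ) → ℝ) (τ : ℝ)
    (hτ0 : 0 < τ) (hτ1 : τ ≤ 1)
    (hF : ContDiff ℝ 1 F)
    (hFnn : ∀ y : Fin n → ℝ, (∀ p, y p ∈ Set.Icc (0 : ℝ) 1) → 0 ≤ F y)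
    (hF0 : F 0 = 0)
    (M : Set (Fin n → ℝ)) (hM : M ⊆ {y | ∀ p, y p ∈ Set.Icc (0 : ℝ) 1})
    (xstar : Fin n → ℝ) (hxstar : xstar ∈ M)
    (x x' : ℝ → Fin n → ℝ)
    (hx0 : x 0 = 0)
    (hxbox : ∀ t ∈ Set.Icc (0 : ℝ) 1, ∀ p, x t p ∈ Set.Icc (0 : ℝ) 1)
    (hxderiv : ∀ t ∈ Set.Icc (0 : ℝ) 1, HasDerivAt x (x' t) t)
    (hineq : ∀ t ∈ Set.Icc (0 : ℝ) 1,
      fderiv ℝ F (x t) (x' t) ≥ τ * (F xstar - F (x t))) :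
    (∀ t ∈ Set.Icc (0 : ℝ) 1, F (x t) ≥ (1 - Real.exp (-τ * t)) * F xstar) ∧
    F (x 1) ≥ (1 - Real.exp (-τ)) * F xstar :=
  atcg_continuous_guarantee_general n F τ hF hF0 xstar x x' hx0 hxderiv hineq
end

section
/- Let f be monotone submodular normalized with partition curvature c_i for partition P_i, i.e., f(S∪{p}) − f(S) ≥ (1−c_i)·f({p}) for all S ⊆ P and p ∈ P_i∖S. Let j° ∈ argmax_{j∈P_i} f({j}). Then for any x ∈ [0,1]^n, the gradient of the multilinear extension satisfies ∂F/∂x_{j°}(x) ≥ (1−c_i)·max_{j∈P_i} ∂F/∂x_j(x). -/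
open Finset

lemma weight_sum (n : ℕ) (x : Fin n → ℝ) (j : Fin n) :
    ∑ R ∈ ((univ : Finset (Fin n)).erase j).powerset,
      (∏ p ∈ R, x p) * ∏ p ∈ ((univ : Finset (Fin n)).erase j) \ R, (1 - x p) = 1 := by
  have := Finset.prod_add (f := x) (g := fun p => 1 - x p) ((univ : Finset (Fin n)).erase j)
  simp at this
  rw [← this]

lemma weight_nonneg (n : ℕ) (x : Fin n → ℝ) (hx : ∀ p, x p ∈ Set.Icc (0 : ℝ) 1)
    (j : Fin n) (R : Finset (Fin n)) :
    0 ≤ (∏ p ∈ R, x p) * ∏ p ∈ ((univ : Finset (Fin n)).erase j) \ R, (1 - x p) := by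
  apply mul_nonneg <;> apply Finset.prod_nonneg <;> intro p _
  · exact (hx p).1
  · linarith [(hx p).2]

/-- If `f` is monotone submodular normalized with partition curvature
`c_i` on block `P_i` (i.e. `f(S∪{p}) − f S ≥ (1−c_i)·f {p}` for all `S` and
`p ∈ P_i∖S`), and `j°` maximizes `f {j}` over `P_i`, then for every `x ∈ [0,1]^n`,
`∂F/∂x_{j°}(x) ≥ (1−c_i)·max_{j∈P_i} ∂F/∂x_j(x)`. -/
theorem partition_curvature_gradient (n : ℕ) (f : Finset (Fin n) → ℝ)
    (hsub : ∀ A B : Finset (Fin n), A ⊆ B → ∀ e ∉ B,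
      f (insert e B) - f B ≤ f (insert e A) - f A)
    (hmono : ∀ A B : Finset (Fin n), A ⊆ B → f A ≤ f B)
    (hnorm : f ∅ = 0)
    (Pi : Finset (Fin n)) (hPne : Pi.Nonempty)
    (ci : ℝ) (hci0 : 0 ≤ ci) (hci1 : ci ≤ 1)
    (hcurv : ∀ (S : Finset (Fin n)) (p : Fin n), p ∈ Pi → p ∉ S →
      f (insert p S) - f S ≥ (1 - ci) * f {p})
    (j0 : Fin n) (hj0 : j0 ∈ Pi) (hbest : ∀ j ∈ Pi, f {j} ≤ f {j0})
    (x : Fin n → ℝ) (hx : ∀ p, x p ∈ Set.Icc (0 : ℝ) 1) :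
    mlgrad n f x j0 ≥ (1 - ci) * Pi.sup' hPne (fun j => mlgrad n f x j) := by
  -- upper bound: mlgrad j ≤ f {j}
  have hub : ∀ j : Fin n, mlgrad n f x j ≤ f {j} := by
    intro j
    calc mlgrad n f x j
        ≤ ∑ R ∈ ((univ : Finset (Fin n)).erase j).powerset,
            f {j} * ((∏ p ∈ R, x p) * ∏ p ∈ ((univ : Finset (Fin n)).erase j) \ R, (1 - x p)) := by
          apply Finset.sum_le_sum
          intro R hR
          rw [mul_assoc]
          apply mul_le_mul_of_nonneg_right _ (weight_nonneg n x hx j R)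
          have hjR : j ∉ R := fun h => by
            have := Finset.mem_powerset.1 hR h
            simp at this
          have := hsub ∅ R (Finset.empty_subset R) j hjR
          simpa [hnorm] using this
      _ = f {j} := by rw [← Finset.mul_sum, weight_sum, mul_one]
  -- lower bound: mlgrad j0 ≥ (1-ci) * f {j0}
  have hlb : (1 - ci) * f {j0} ≤ mlgrad n f x j0 := by
    calc (1 - ci) * f {j0}
        = ∑ R ∈ ((univ : Finset (Fin n)).erase j0).powerset,
            (1 - ci) * f {j0} * ((∏ p ∈ R, x p) * ∏ p ∈ ((univ : Finset (Fin n)).erase j0) \ R, (1 - x p)) := by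
          rw [← Finset.mul_sum, weight_sum, mul_one]
      _ ≤ mlgrad n f x j0 := by
          apply Finset.sum_le_sum
          intro R hR
          rw [mul_assoc (f (insert j0 R) - f R)]
          apply mul_le_mul_of_nonneg_right _ (weight_nonneg n x hx j0 R)
          have hjR : j0 ∉ R := fun h => by
            have := Finset.mem_powerset.1 hR h
            simp at this
          exact hcurv R j0 hj0 hjR
  have hfj0 : 0 ≤ f {j0} := by
    have := hmono ∅ {j0} (Finset.empty_subset _)
    linarith [this, hnorm.ge, hnorm.le]
  obtain ⟨j, hjmem, hjeq⟩ := Finset.exists_mem_eq_sup' hPne (fun j => mlgrad n f x j)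
  rw [hjeq]
  have : mlgrad n f x j ≤ f {j0} := (hub j).trans (hbest j hjmem)
  calc (1 - ci) * mlgrad n f x j ≤ (1 - ci) * f {j0} := by
        apply mul_le_mul_of_nonneg_left this; linarith
    _ ≤ mlgrad n f x j0 := hlb
end

section
/- Suppose the active set A_i(t) contains the best-singleton element j°_i = argmax_{j∈P_i} f({j}) for all i and t, and f has total curvature c. Then the progress ratio η_i(t) = max_{j∈A_i(t)} [∇F(x(t))]_j / max_{j∈P_i} [∇F(x(t))]_j satisfies η_i(t) ≥ 1 − c for all i and t (whenever the denominator is positive). -/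
open Finset

lemma mlgrad_le (n : ℕ) (f : Finset (Fin n) → ℝ)
    (hsub : ∀ A B : Finset (Fin n), A ⊆ B → ∀ e ∉ B,
      f (insert e B) - f B ≤ f (insert e A) - f A)
    (hnorm : f ∅ = 0)
    (x : Fin n → ℝ) (hx : ∀ p, x p ∈ Set.Icc (0 : ℝ) 1) (j : Fin n) :
    mlgrad n f x j ≤ f {j} := by
  have := weight_sum n x j
  calc mlgrad n f x j
      ≤ ∑ R ∈ ((univ : Finset (Fin n)).erase j).powerset,
        f {j} * ((∏ p ∈ R, x p) * ∏ p ∈ ((univ : Finset (Fin n)).erase j) \ R, (1 - x p)) := by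
        apply Finset.sum_le_sum
        intro R hR
        rw [mul_assoc]
        apply mul_le_mul_of_nonneg_right _ (weight_nonneg n x hx j R)
        have hjR : j ∉ R := fun h => by
          have := Finset.mem_powerset.mp hR h
          simp at this
        have := hsub ∅ R (Finset.empty_subset R) j hjR
        simp [hnorm] at this
        linarith
    _ = f {j} := by rw [← Finset.mul_sum, this, mul_one]

lemma mlgrad_ge (n : ℕ) (f : Finset (Fin n) → ℝ) (c : ℝ)
    (hcurv : ∀ (S : Finset (Fin n)) (p : Fin n), p ∉ S →
      f (insert p S) - f S ≥ (1 - c) * f {p})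
    (x : Fin n → ℝ) (hx : ∀ p, x p ∈ Set.Icc (0 : ℝ) 1) (j : Fin n) :
    (1 - c) * f {j} ≤ mlgrad n f x j := by
  have := weight_sum n x j
  calc (1 - c) * f {j}
      = ∑ R ∈ ((univ : Finset (Fin n)).erase j).powerset,
        (1 - c) * f {j} * ((∏ p ∈ R, x p) * ∏ p ∈ ((univ : Finset (Fin n)).erase j) \ R, (1 - x p)) := by
        rw [← Finset.mul_sum, this, mul_one]
    _ ≤ mlgrad n f x j := by
        apply Finset.sum_le_sum
        intro R hR
        rw [mul_assoc, mul_assoc, ← mul_assoc (1 - c)]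
        apply mul_le_mul_of_nonneg_right _ (weight_nonneg n x hx j R)
        have hjR : j ∉ R := fun h => by
          have := Finset.mem_powerset.mp hR h
          simp at this
        exact hcurv R j hjR

/-- If the active set `A ⊆ P_i` contains the best-singleton element
`j° = argmax_{j∈P_i} f {j}` and `f` (monotone, submodular, normalized) has total
curvature `c`, then whenever the denominator is positive, the progress ratio
`η_i = max_{j∈A} [∇F(x)]_j / max_{j∈P_i} [∇F(x)]_j` satisfies `η_i ≥ 1 − c`. -/
theorem progress_ratio_curvature_bound (n : ℕ) (f : Finset (Fin n) → ℝ)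
    (hsub : ∀ A B : Finset (Fin n), A ⊆ B → ∀ e ∉ B,
      f (insert e B) - f B ≤ f (insert e A) - f A)
    (hmono : ∀ A B : Finset (Fin n), A ⊆ B → f A ≤ f B)
    (hnorm : f ∅ = 0)
    (c : ℝ) (hc0 : 0 ≤ c) (hc1 : c ≤ 1)
    (hcurv : ∀ (S : Finset (Fin n)) (p : Fin n), p ∉ S →
      f (insert p S) - f S ≥ (1 - c) * f {p})
    (Pi : Finset (Fin n)) (hPne : Pi.Nonempty)
    (A : Finset (Fin n)) (hA : A ⊆ Pi) (hAne : A.Nonempty)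
    (j0 : Fin n) (hj0P : j0 ∈ Pi) (hbest : ∀ j ∈ Pi, f {j} ≤ f {j0})
    (hj0A : j0 ∈ A)
    (x : Fin n → ℝ) (hx : ∀ p, x p ∈ Set.Icc (0 : ℝ) 1)
    (hden : 0 < Pi.sup' hPne (fun j => mlgrad n f x j)) :
    A.sup' hAne (fun j => mlgrad n f x j) / Pi.sup' hPne (fun j => mlgrad n f x j)
      ≥ 1 - c := by
  rw [ge_iff_le, le_div_iff₀ hden]
  obtain ⟨j', hj'P, hj'⟩ := Finset.exists_mem_eq_sup' hPne (fun j => mlgrad n f x j)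
  rw [hj']
  calc (1 - c) * mlgrad n f x j'
      ≤ (1 - c) * f {j'} := by
        apply mul_le_mul_of_nonneg_left (mlgrad_le n f hsub hnorm x hx j') (by linarith)
    _ ≤ (1 - c) * f {j0} := by
        apply mul_le_mul_of_nonneg_left (hbest j' hj'P) (by linarith)
    _ ≤ mlgrad n f x j0 := mlgrad_ge n f c hcurv x hx j0
    _ ≤ A.sup' hAne (fun j => mlgrad n f x j) := Finset.le_sup' _ hj0A
end
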